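/- arXiv:2210.07938 — 2 statements merged into one kernel-verified Lean document; each statement's English description precedes it below -/
import Mathlib

section
/- Let K be a compact topological space, T ⊆ ℝ a nonempty index set, and (F_t)_{t∈T} a family of lower semicontinuous functions F_t : K → ℝ ∪ {∞} that is pointwise monotone increasing in t (i.e., t₁ ≤ t₂ implies F_{t₁}(p) ≤ F_{t₂}(p) for all p ∈ K). For each t let M_t ⊆ K be the (nonempty) set of global minimum points of F_t, and let F(p) := sup_{t∈T} F_t(p). Then every accumulation point of a net (x_t)_{t∈T} with x_t ∈ M_t is a global minimum point of F. -/
/-- Accumulation points of nets of minimizers of a pointwise increasing family of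
lower semicontinuous functions on a compact space are minimizers of the pointwise sup. -/
theorem minima_accumulation
    {K : Type*} [TopologicalSpace K] [CompactSpace K]
    (T : Set ℝ) (hT : T.Nonempty)
    (F : ℝ → K → EReal)
    (hbot : ∀ t ∈ T, ∀ p : K, F t p ≠ ⊥)
    (hlsc : ∀ t ∈ T, LowerSemicontinuous (F t))
    (hmono : ∀ p : K, ∀ t₁ ∈ T, ∀ t₂ ∈ T, t₁ ≤ t₂ → F t₁ p ≤ F t₂ p)
    (M : ℝ → Set K)
    (hM : ∀ t ∈ T, M t = {p : K | ∀ q : K, F t p ≤ F t q})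
    (hMne : ∀ t ∈ T, (M t).Nonempty)
    (pstar : K)
    (hacc : ∀ s ∈ T, ∀ U ∈ nhds pstar, ∃ t ∈ T, s ≤ t ∧ (M t ∩ U).Nonempty) :
    ∀ q : K, (⨆ t ∈ T, F t pstar) ≤ ⨆ t ∈ T, F t q := by
  intro q
  refine iSup₂_le fun s hs => ?_
  refine le_of_forall_lt fun c hc => ?_
  have hU : {x : K | c < F s x} ∈ nhds pstar := hlsc s hs pstar c hc
  obtain ⟨t, ht, hst, x, hxM, hxU⟩ := hacc s hs _ hU
  have h1 : c < F s x := hxU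
  have h2 : F s x ≤ F t x := hmono x s hs t ht hst
  have h3 : F t x ≤ F t q := by
    have := hM t ht ▸ hxM
    exact this q
  calc c < F t q := lt_of_lt_of_le h1 (h2.trans h3)
    _ ≤ ⨆ u ∈ T, F u q := le_iSup₂ (f := fun u _ => F u q) t ht
end

section
/- Let T : V → V be an invertible linear map on a finite-dimensional real inner product space, let E ⊆ V be a subspace, W a spanning set of E, and u ∈ V a vector not orthogonal to E. Then there exists w ∈ W with ⟨u, w⟩ ≠ 0, and for this w: log(‖(T⁻¹)* u^♭‖/‖u^♭‖) + log(‖T w‖/‖w‖) ≥ log cos∠(u, w), where u^♭ := ⟨u, ·⟩ and ∠(u, w) is the angle between u and w. -/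
open scoped RealInnerProductSpace

/-- If `u` is not orthogonal to `E = span W`, then some `w ∈ W` has `⟪u,w⟫ ≠ 0`, and for
this `w` the adjoint and direct log-expansion factors are bounded below by log cos∠(u,w). -/
theorem naim_angle_inequality
    {V : Type*} [NormedAddCommGroup V] [InnerProductSpace ℝ V] [FiniteDimensional ℝ V]
    (T : V ≃L[ℝ] V) (E : Submodule ℝ V) (W : Set V)
    (hW : Submodule.span ℝ W = E)
    (u : V) (hu : ∃ e ∈ E, ⟪u, e⟫ ≠ 0) :
    ∃ w ∈ W, ⟪u, w⟫ ≠ 0 ∧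
      Real.log (‖((innerSL ℝ u).comp (T.symm : V →L[ℝ] V) : V →L[ℝ] ℝ)‖ / ‖(innerSL ℝ u : V →L[ℝ] ℝ)‖)
        + Real.log (‖T w‖ / ‖w‖)
        ≥ Real.log (|⟪u, w⟫| / (‖u‖ * ‖w‖)) := by
  -- find w
  obtain ⟨e, heE, hne⟩ := hu
  have hw : ∃ w ∈ W, ⟪u, w⟫ ≠ 0 := by
    by_contra h
    push_neg at h
    have hall : ∀ x ∈ Submodule.span ℝ W, ⟪u, x⟫ = 0 := by
      intro x hx
      induction hx using Submodule.span_induction with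
      | mem x hx => exact h x hx
      | zero => simp
      | add x y _ _ hx hy => rw [inner_add_right, hx, hy]; ring
      | smul a x _ hx => rw [real_inner_smul_right, hx]; ring
    exact hne (hall e (hW ▸ heE))
  obtain ⟨w, hwW, hwu⟩ := hw
  refine ⟨w, hwW, hwu, ?_⟩
  set S : V →L[ℝ] ℝ := (innerSL ℝ u).comp (T.symm : V →L[ℝ] V)
  have hu0 : u ≠ 0 := by rintro rfl; simp at hwu
  have hw0 : w ≠ 0 := by rintro rfl; simp at hwu
  have hnu : ‖u‖ > 0 := norm_pos_iff.mpr hu0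
  have hnw : ‖w‖ > 0 := norm_pos_iff.mpr hw0
  have hTw : (0:ℝ) < ‖T w‖ :=
    norm_pos_iff.mpr (fun h => hw0 (T.injective (by simpa using h)))
  -- key : |⟪u,w⟫| ≤ ‖S‖ * ‖T w‖
  have key : |⟪u, w⟫| ≤ ‖S‖ * ‖T w‖ := by
    have : S (T w) = ⟪u, w⟫ := by simp [S]
    calc |⟪u, w⟫| = ‖S (T w)‖ := by rw [this]; simp
    _ ≤ ‖S‖ * ‖T w‖ := S.le_opNorm _
  have hS : 0 < ‖S‖ := by
    rcases lt_or_eq_of_le (norm_nonneg S) with h | h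
    · exact h
    · exfalso; apply hwu
      have : |⟪u, w⟫| ≤ 0 := by
        calc |⟪u, w⟫| ≤ ‖S‖ * ‖T w‖ := key
        _ = 0 := by rw [← h]; ring
      exact abs_eq_zero.mp (le_antisymm this (abs_nonneg _))
  have hnflat : ‖(innerSL ℝ u : V →L[ℝ] ℝ)‖ = ‖u‖ := innerSL_apply_norm ℝ u
  have hineq : |⟪u, w⟫| / (‖u‖ * ‖w‖) ≤ (‖S‖ / ‖u‖) * (‖T w‖ / ‖w‖) := by
    rw [div_mul_div_comm]
    apply div_le_div_of_nonneg_right key (by positivity) |>.trans_eq rfl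
  have h1 : 0 < |⟪u, w⟫| / (‖u‖ * ‖w‖) := by positivity
  have := Real.log_le_log h1 hineq
  rw [Real.log_mul (by positivity) (by positivity)] at this
  rw [ge_iff_le, hnflat]
  exact this
end
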